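/- Primal-dual correspondence: Take any 1 ≤ k ≤ n−1, an abelian group G, and a cube B in ℤⁿ. Then the exterior derivative d is a surjective map from the set of G-valued (n−k−1)-forms g on the dual cube *B satisfying dg = 0 on all (n−k)-cells on the boundary of *B, onto the set of Hodge duals *f of G-valued k-forms f on B satisfying δf = 0. Moreover, if G is finite and m is the number of closed G-valued (n−k−1)-forms on *B, then every such *f has exactly m preimages under d. -/

import Mathlib

/-!
Discrete exterior calculus on the cell complex of `ℤⁿ`.

A positively oriented `k`-cell `dx_{i₁} ∧ ⋯ ∧ dx_{i_k}` (with `i₁ < ⋯ < i_k`) at the point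
`x ∈ ℤⁿ` is encoded as the pair `(x, S)` with `S = {i₁, …, i_k}`, so its dimension is `S.card`.
A `G`-valued `k`-form is a `G`-valued function on cells; only its values on cells of
dimension `k` are relevant (a single function type conveniently encodes forms of all
degrees; every statement below is made on cells of the appropriate dimension).

The dual lattice `*ℤⁿ` is identified with `ℤⁿ`: the dual vertex `y = z + (1/2, …, 1/2)`
(the center of the unit `n`-cell with base vertex `z`) is identified with the integer point
`z`, and the edges of the dual lattice at `y` point in the *negative* coordinate directions;
the dual cell `dy_{j₁} ∧ ⋯ ∧ dy_{j_m}` at `y` is encoded as the pair `(z, {j₁, …, j_m})`.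
-/

/-- A cell of `ℤⁿ` (or of the dual lattice `*ℤⁿ`): a base point and a set of spanning
directions. -/
abbrev GCell (n : ℕ) := (Fin n → ℤ) × Finset (Fin n)

/-- The unit vector `e_i`. -/
def unitV (n : ℕ) (i : Fin n) : Fin n → ℤ := fun m => if m = i then 1 else 0

section Forms

variable {n : ℕ} {G : Type*} [AddCommGroup G]

/-- The discrete exterior derivative on `ℤⁿ`: for a `k`-form `f`,
`(df)_{i₁⋯i_{k+1}}(x) = ∑_j (−1)^{j−1} ∂_{i_j} f_{i₁⋯î_j⋯i_{k+1}}(x)`, where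
`∂_i h(x) = h(x + e_i) − h(x)`. -/
def dF (f : GCell n → G) : GCell n → G := fun c =>
  ∑ i ∈ c.2.attach,
    ((-1 : ℤ) ^ (c.2.filter (fun j => j < i.1)).card) •
      (f (c.1 + unitV n i.1, c.2.erase i.1) - f (c.1, c.2.erase i.1))

/-- The exterior derivative on the dual lattice: the same formula as `dF` but with `∂_i`
replaced by `∂̄_i`, where `∂̄_i h(y) = h(y) − h(y − e_i)`. -/
def dFDual (f : GCell n → G) : GCell n → G := fun c =>
  ∑ i ∈ c.2.attach,
    ((-1 : ℤ) ^ (c.2.filter (fun j => j < i.1)).card) •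
      (f (c.1, c.2.erase i.1) - f (c.1 - unitV n i.1, c.2.erase i.1))

/-- The discrete coderivative on `ℤⁿ`: for a `k`-form `f`,
`δf(x) = ∑_{i₁<⋯<i_k} ∑_l (−1)^l ∂̄_{i_l} f_{i₁⋯i_k}(x) dx_{i₁} ∧ ⋯ ∧ dx̂_{i_l} ∧ ⋯ ∧ dx_{i_k}`,
where `∂̄_i h(x) = h(x) − h(x − e_i)`  (and `δf = 0` for `0`-forms). -/
def codiff (f : GCell n → G) : GCell n → G := fun c =>
  ∑ i ∈ (c.2ᶜ).attach,
    ((-1 : ℤ) ^ ((c.2.filter (fun j => j < i.1)).card + 1)) •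
      (f (c.1, insert i.1 c.2) - f (c.1 - unitV n i.1, insert i.1 c.2))

/-- The sign of the permutation `(i₁, …, i_k, j₁, …, j_{n−k})`, where `i₁ < ⋯ < i_k` lists
`S` and `j₁ < ⋯ < j_{n−k}` lists its complement. -/
def hodgeSign (S : Finset (Fin n)) : ℤ :=
  (-1) ^ (∑ i ∈ S, ((Sᶜ : Finset (Fin n)).filter (fun j => j < i)).card)

/-- The Hodge dual of a `k`-form `f` on `ℤⁿ`: the `(n−k)`-form `*f` on the dual lattice
determined by `*f(*c) = f(c)`, i.e. `*f(z, T) = s · f(z, Tᶜ)` with `s` the sign of the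
permutation `(Tᶜ, T)`. -/
def hodgeToDual (f : GCell n → G) : GCell n → G := fun c =>
  hodgeSign (c.2ᶜ) • f (c.1, c.2ᶜ)

/-- The Hodge dual of a form `g` on the dual lattice `*ℤⁿ`: the form `*g` on `ℤⁿ`
determined by `*g(*c') = g(c')`, i.e. `*g(x, S) = (−1)^{|S|·|Sᶜ|} s · g(x, Sᶜ)` with `s`
the sign of the permutation `(S, Sᶜ)`. -/
def hodgeToPrimal (g : GCell n → G) : GCell n → G := fun c =>
  ((-1 : ℤ) ^ (c.2.card * (c.2ᶜ : Finset (Fin n)).card) * hodgeSign c.2) • g (c.1, c.2ᶜ)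

end Forms

section Cube

variable {n : ℕ}

/-- Membership of a point in the cube `[a₁, a₁+w] × ⋯ × [a_n, a_n+w] ∩ ℤⁿ`. -/
def InCube (a : Fin n → ℤ) (w : ℕ) (v : Fin n → ℤ) : Prop :=
  ∀ m, a m ≤ v m ∧ v m ≤ a m + w

/-- `v` is a vertex of the cell `c` (that is, `v = x + ∑_{i ∈ T} e_i` for some `T ⊆ S`). -/
def CellVert (c : GCell n) (v : Fin n → ℤ) : Prop :=
  ∃ T ⊆ c.2, v = fun m => c.1 m + (if m ∈ T then 1 else 0)

/-- The cell `c` is in the cube: all its vertices are in the cube. -/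
def CellIn (a : Fin n → ℤ) (w : ℕ) (c : GCell n) : Prop :=
  ∀ m, a m ≤ c.1 m ∧ c.1 m + (if m ∈ c.2 then 1 else 0) ≤ a m + w

/-- A boundary vertex of the cube. -/
def BdryVtx (a : Fin n → ℤ) (w : ℕ) (v : Fin n → ℤ) : Prop :=
  InCube a w v ∧ ∃ m, v m = a m ∨ v m = a m + w

/-- The cell `c` is on the boundary of the cube: all its vertices are boundary vertices. -/
def CellOnBdry (a : Fin n → ℤ) (w : ℕ) (c : GCell n) : Prop :=
  CellIn a w c ∧ ∀ v, CellVert c v → BdryVtx a w v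

/-- The cell `c` is outside the cube: some vertex of `c` is outside the cube. -/
def CellOutside (a : Fin n → ℤ) (w : ℕ) (c : GCell n) : Prop :=
  ∃ v, CellVert c v ∧ ¬ InCube a w v

lemma cellIn_iff {a : Fin n → ℤ} {w : ℕ} {c : GCell n} :
    CellIn a w c ↔ ∀ v, CellVert c v → InCube a w v := by
  constructor
  · rintro h v ⟨T, hT, rfl⟩ m
    obtain ⟨h1, h2⟩ := h m
    by_cases hm : m ∈ T
    · have hmS : m ∈ c.2 := hT hm
      simp only [hm, if_pos, hmS] at *
      omega
    · simp only [hm, if_neg, not_false_iff, add_zero]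
      constructor
      · exact h1
      · split at h2 <;> omega
  · intro h m
    have h0 := h c.1 ⟨∅, Finset.empty_subset _, by funext m; simp⟩
    constructor
    · exact (h0 m).1
    · by_cases hm : m ∈ c.2
      · have := (h (fun m' => c.1 m' + (if m' ∈ ({m} : Finset (Fin n)) then 1 else 0))
          ⟨{m}, by simpa using hm, rfl⟩) m
        simpa [hm] using this.2
      · have := h0 m
        simpa [hm] using this.2

lemma cellIn_erase {a : Fin n → ℤ} {w : ℕ} {c : GCell n} (h : CellIn a w c) (i : Fin n) :
    CellIn a w (c.1, c.2.erase i) := by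
  intro m
  obtain ⟨h1, h2⟩ := h m
  refine ⟨h1, ?_⟩
  by_cases hm : m ∈ c.2.erase i
  · simpa [hm, Finset.mem_of_mem_erase hm] using h2
  · simp only [hm, if_neg, not_false_iff, add_zero]
    split at h2 <;> omega

lemma cellIn_shift_erase {a : Fin n → ℤ} {w : ℕ} {c : GCell n} (h : CellIn a w c)
    {i : Fin n} (hi : i ∈ c.2) :
    CellIn a w (c.1 + unitV n i, c.2.erase i) := by
  intro m
  obtain ⟨h1, h2⟩ := h m
  simp only [Pi.add_apply, unitV]
  by_cases hmi : m = i
  · subst hmi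
    have hmm : m ∉ c.2.erase m := by simp
    simp only [if_pos rfl, hmm, if_neg, not_false_iff, add_zero]
    simp only [hi, if_pos] at h2
    omega
  · simp only [hmi, if_neg, not_false_iff, add_zero]
    refine ⟨h1, ?_⟩
    by_cases hm : m ∈ c.2.erase i
    · simpa [hm, Finset.mem_of_mem_erase hm] using h2
    · simp only [hm, if_neg, not_false_iff, add_zero]
      split at h2 <;> omega

variable {G : Type*} [AddCommGroup G]

/-- A `G`-valued form on the cube with corner `a` and width `w`: a function on the cells of
the cube (of all dimensions; only the values in one dimension are relevant at a time). -/
abbrev FormC (a : Fin n → ℤ) (w : ℕ) (G : Type*) := {c : GCell n // CellIn a w c} → G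

/-- The exterior derivative of a form on a cube, given by the same formula as `dF`. -/
def dFC (a : Fin n → ℤ) (w : ℕ) (f : FormC a w G) : FormC a w G := fun c =>
  ∑ i ∈ c.1.2.attach,
    ((-1 : ℤ) ^ (c.1.2.filter (fun j => j < i.1)).card) •
      (f ⟨(c.1.1 + unitV n i.1, c.1.2.erase i.1), cellIn_shift_erase c.2 i.2⟩
        - f ⟨(c.1.1, c.1.2.erase i.1), cellIn_erase c.2 i.1⟩)

end Cube

section DegreeForms

variable {n : ℕ} {G : Type*} [AddCommGroup G]

/-- A `G`-valued `k`-form on the cube with corner `a` and width `w`: a function on the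
positively oriented `k`-cells in the cube. -/
abbrev FormB (a : Fin n → ℤ) (w : ℕ) (k : ℕ) (G : Type*) :=
  {c : GCell n // CellIn a w c ∧ c.2.card = k} → G

/-- The exterior derivative of a `k`-form on a cube, as a `(k+1)`-form on the cube. -/
def dB {a : Fin n → ℤ} {w : ℕ} {k : ℕ} (f : FormB a w k G) : FormB a w (k + 1) G := fun c =>
  ∑ i ∈ c.1.2.attach,
    ((-1 : ℤ) ^ (c.1.2.filter (fun j => j < i.1)).card) •
      (f ⟨(c.1.1 + unitV n i.1, c.1.2.erase i.1),
          ⟨cellIn_shift_erase c.2.1 i.2, by simp [Finset.card_erase_of_mem i.2, c.2.2]⟩⟩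
        - f ⟨(c.1.1, c.1.2.erase i.1),
          ⟨cellIn_erase c.2.1 i.1, by simp [Finset.card_erase_of_mem i.2, c.2.2]⟩⟩)

open scoped Classical in
/-- The extension of a `k`-form on a cube to a form on all of `ℤⁿ`, by zero outside. -/
noncomputable def extZ (a : Fin n → ℤ) (w : ℕ) (k : ℕ) (f : FormB a w k G) :
    GCell n → G := fun c =>
  if h : CellIn a w c ∧ c.2.card = k then f ⟨c, h⟩ else 0

end DegreeForms

section DualCube

variable {n : ℕ}

/-!
In the integer coordinates for the dual lattice described above, the dual cube `*B` of the
cube `B` with corner `a` and width `w` (whose dual vertices are the centers of the unit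
`n`-cells meeting `B`, i.e. `*B = [a−1/2, a+w+1/2]ⁿ ∩ *ℤⁿ`) has vertex set `[a−1, a+w]ⁿ`;
a dual cell `(z, T)` has vertices `z − ∑_{i∈T'} e_i` for `T' ⊆ T`.
-/

/-- Membership of a dual-lattice point (in integer coordinates) in the dual cube `*B`. -/
def InDCube (a : Fin n → ℤ) (w : ℕ) (v : Fin n → ℤ) : Prop :=
  ∀ m, a m - 1 ≤ v m ∧ v m ≤ a m + w

/-- `v` is a vertex of the dual cell `c` (i.e. `v = z − ∑_{i ∈ T'} e_i` for some `T' ⊆ T`). -/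
def DCellVert (c : GCell n) (v : Fin n → ℤ) : Prop :=
  ∃ T ⊆ c.2, v = fun m => c.1 m - (if m ∈ T then 1 else 0)

/-- The dual cell `c` is in the dual cube `*B`: all its vertices are in `*B`. -/
def DCellIn (a : Fin n → ℤ) (w : ℕ) (c : GCell n) : Prop :=
  ∀ m, a m - 1 ≤ c.1 m - (if m ∈ c.2 then 1 else 0) ∧ c.1 m ≤ a m + w

/-- A boundary vertex of the dual cube `*B`. -/
def DBdryVtx (a : Fin n → ℤ) (w : ℕ) (v : Fin n → ℤ) : Prop :=
  InDCube a w v ∧ ∃ m, v m = a m - 1 ∨ v m = a m + w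

/-- The dual cell `c` is on the boundary of `*B`: all its vertices are boundary vertices. -/
def DCellOnBdry (a : Fin n → ℤ) (w : ℕ) (c : GCell n) : Prop :=
  DCellIn a w c ∧ ∀ v, DCellVert c v → DBdryVtx a w v

/-- The dual cell `c` is outside `*B`: some vertex of `c` is outside `*B`. -/
def DCellOutside (a : Fin n → ℤ) (w : ℕ) (c : GCell n) : Prop :=
  ∃ v, DCellVert c v ∧ ¬ InDCube a w v

/-- The Hodge dual of the cell `(x, S)`, as an unoriented cell of the dual lattice:
the `(n−k)`-cell `(x, Sᶜ)`. -/
def dualCell (c : GCell n) : GCell n := (c.1, (c.2ᶜ : Finset (Fin n)))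

lemma dCellIn_erase {a : Fin n → ℤ} {w : ℕ} {c : GCell n} (h : DCellIn a w c) (i : Fin n) :
    DCellIn a w (c.1, c.2.erase i) := by
  intro m
  obtain ⟨h1, h2⟩ := h m
  refine ⟨?_, h2⟩
  by_cases hm : m ∈ c.2.erase i
  · simpa [hm, Finset.mem_of_mem_erase hm] using h1
  · simp only [hm, if_neg, not_false_iff, sub_zero]
    split at h1 <;> omega

lemma dCellIn_shift_erase {a : Fin n → ℤ} {w : ℕ} {c : GCell n} (h : DCellIn a w c)
    {i : Fin n} (hi : i ∈ c.2) :
    DCellIn a w (c.1 - unitV n i, c.2.erase i) := by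
  intro m
  obtain ⟨h1, h2⟩ := h m
  simp only [Pi.sub_apply, unitV]
  by_cases hmi : m = i
  · subst hmi
    have hmm : m ∉ c.2.erase m := by simp
    simp only [if_pos rfl, hmm, if_neg, not_false_iff, sub_zero]
    simp only [hi, if_pos] at h1
    omega
  · simp only [hmi, if_neg, not_false_iff, sub_zero]
    refine ⟨?_, h2⟩
    by_cases hm : m ∈ c.2.erase i
    · simpa [hm, Finset.mem_of_mem_erase hm] using h1
    · simp only [hm, if_neg, not_false_iff, sub_zero]
      split at h1 <;> omega

variable {G : Type*} [AddCommGroup G]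

/-- A `G`-valued `j`-form on the dual cube `*B`: a function on the `j`-cells of the dual
lattice lying in `*B`. -/
abbrev FormDB (a : Fin n → ℤ) (w : ℕ) (j : ℕ) (G : Type*) :=
  {c : GCell n // DCellIn a w c ∧ c.2.card = j} → G

/-- The exterior derivative of a `j`-form on the dual cube `*B`, as a `(j+1)`-form on `*B`
(the same formula as `dF`, with `∂_i` replaced by `∂̄_i`). -/
def dDB {a : Fin n → ℤ} {w : ℕ} {j : ℕ} (g : FormDB a w j G) : FormDB a w (j + 1) G :=
  fun c =>
    ∑ i ∈ c.1.2.attach,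
      ((-1 : ℤ) ^ (c.1.2.filter (fun j' => j' < i.1)).card) •
        (g ⟨(c.1.1, c.1.2.erase i.1),
            ⟨dCellIn_erase c.2.1 i.1, by simp [Finset.card_erase_of_mem i.2, c.2.2]⟩⟩
          - g ⟨(c.1.1 - unitV n i.1, c.1.2.erase i.1),
            ⟨dCellIn_shift_erase c.2.1 i.2, by simp [Finset.card_erase_of_mem i.2, c.2.2]⟩⟩)

open scoped Classical in
/-- The Hodge dual `*f`, a `j`-form on the dual cube `*B`, of a `k`-form `f` on the cube
`B`: it is determined by `*f(*c) = f(c)` on the internal cells of `*B` (equivalently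
`*f(z,T) = s·f(z,Tᶜ)` with `s` the sign of the permutation `(Tᶜ, T)`), and is zero on the
boundary cells of `*B`. -/
noncomputable def starB (a : Fin n → ℤ) (w : ℕ) (k : ℕ) {j : ℕ} (f : FormB a w k G) :
    FormDB a w j G := fun c =>
  if DCellOnBdry a w c.1 then 0
  else hodgeSign ((c.1.2ᶜ : Finset (Fin n))) • extZ a w k f (c.1.1, (c.1.2ᶜ : Finset (Fin n)))

end DualCube

/-!
If `g` is closed on the boundary of `*B`, then `f := *(dg)` is a form on `B` with `*f = dg`,
and it is coclosed because the Hodge star turns `δ` into `±d` and `d² = 0`.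
Conversely, for coclosed `f`, the dual `Φ = *f` of its extension by zero is closed on the whole
dual lattice and vanishes below `B`, so summing `Φ` along the first coordinate direction (a
discrete Poincaré lemma) gives `g` with `dg = Φ`, and `dg = *f = 0` on the boundary of `*B`.
Since `d` is additive, its fibres over `*f` are translates of the closed forms.
-/

section Sign

variable {n : ℕ}

theorem neg_one_pow_eq_of_mod_two_eq {a b : ℕ} (h : a % 2 = b % 2) : (-1 : ℤ) ^ a = (-1) ^ b :=
  neg_one_pow_congr (by simp only [Nat.even_iff, h])

theorem card_filter_lt_add_card_filter_compl_lt (S : Finset (Fin n)) (i : Fin n) :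
    (S.filter (· < i)).card + (Sᶜ.filter (· < i)).card = i.val := by
  rw [← Finset.card_union_of_disjoint (Finset.disjoint_filter_filter disjoint_compl_right),
    ← Finset.filter_union, Finset.union_compl, Finset.filter_gt_eq_Iio, Fin.card_Iio]

theorem hodgeSign_insert {S : Finset (Fin n)} {i : Fin n} (hi : i ∉ S) :
    hodgeSign (insert i S) = (-1) ^ (S.card + i.val) * hodgeSign S := by
  unfold hodgeSign
  rw [← pow_add, Finset.sum_insert hi, Finset.compl_insert]
  apply neg_one_pow_eq_of_mod_two_eq
  have hic : i ∈ Sᶜ := Finset.mem_compl.mpr hi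
  -- removing `i` from `Sᶜ` lowers the count below each `p ∈ S` with `i < p` by one
  have hsum : ∑ p ∈ S, (Sᶜ.filter (· < p)).card
      = ∑ p ∈ S, ((Sᶜ.erase i).filter (· < p)).card + (S.filter (i < ·)).card := by
    rw [Finset.card_filter, ← Finset.sum_add_distrib]
    refine Finset.sum_congr rfl fun p _ => ?_
    rw [Finset.filter_erase]
    split_ifs with hip
    · exact (Finset.card_erase_add_one (Finset.mem_filter.mpr ⟨hic, hip⟩)).symm
    · rw [Finset.erase_eq_of_notMem (by simp [hip]), add_zero]
  have hsplit : (S.filter (i < ·)).card + (S.filter (· < i)).card = S.card := by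
    conv_rhs => rw [← S.card_filter_add_card_filter_not (i < ·)]
    congr 2
    exact Finset.filter_congr fun p hp =>
      ⟨fun h => not_lt.mpr h.le,
        fun h => lt_of_le_of_ne (not_lt.mp h) (ne_of_mem_of_not_mem hp hi)⟩
  have hbelow := card_filter_lt_add_card_filter_compl_lt S i
  have hi' : ((Sᶜ.erase i).filter (· < i)).card = (Sᶜ.filter (· < i)).card := by
    rw [Finset.filter_erase, Finset.erase_eq_of_notMem (by simp)]
  omega

theorem card_compl_add_card_fin (S : Finset (Fin n)) : Sᶜ.card + S.card = n := by
  simp [Finset.card_compl_add_card S]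

theorem hodgeSign_mul_self (S : Finset (Fin n)) : hodgeSign S * hodgeSign S = 1 := by
  rw [hodgeSign, ← pow_add, ← two_mul, pow_mul, neg_one_sq, one_pow]

end Sign

theorem Finset.sum_sum_erase_eq_zero_of_antisymm {ι M : Type*} [DecidableEq ι] [AddCommGroup M]
    (T : Finset ι) (F : ι → ι → M) (hF : ∀ i ∈ T, ∀ l ∈ T, i ≠ l → F i l + F l i = 0) :
    ∑ i ∈ T, ∑ l ∈ T.erase i, F i l = 0 := by
  rw [← Finset.sum_finset_product' T.offDiag T (fun i => T.erase i) fun p => by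
    simp only [Finset.mem_offDiag, Finset.mem_erase]; tauto]
  refine Finset.sum_involution (fun p _ => p.swap) (fun p hp => ?_) (fun p hp _ h => ?_)
    (fun p hp => by simp only [Finset.mem_offDiag] at hp ⊢; grind) (fun p _ => p.swap_swap)
  · obtain ⟨h1, h2, h12⟩ := Finset.mem_offDiag.mp hp
    exact hF _ h1 _ h2 h12
  · exact (Finset.mem_offDiag.mp hp).2.2 (congrArg Prod.snd h)

section DualDerivative

variable {n : ℕ} {G : Type*} [AddCommGroup G]

theorem dFDual_apply (f : GCell n → G) (c : GCell n) :
    dFDual f c = ∑ i ∈ c.2, ((-1 : ℤ) ^ (c.2.filter (· < i)).card) •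
      (f (c.1, c.2.erase i) - f (c.1 - unitV n i, c.2.erase i)) :=
  Finset.sum_attach c.2 fun i => ((-1 : ℤ) ^ (c.2.filter (· < i)).card) •
    (f (c.1, c.2.erase i) - f (c.1 - unitV n i, c.2.erase i))

theorem codiff_apply (f : GCell n → G) (c : GCell n) :
    codiff f c = ∑ i ∈ c.2ᶜ, ((-1 : ℤ) ^ ((c.2.filter (· < i)).card + 1)) •
      (f (c.1, insert i c.2) - f (c.1 - unitV n i, insert i c.2)) :=
  Finset.sum_attach c.2ᶜ fun i => ((-1 : ℤ) ^ ((c.2.filter (· < i)).card + 1)) •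
    (f (c.1, insert i c.2) - f (c.1 - unitV n i, insert i c.2))

/-- The sign with which the face `T \ {i, l}` occurs in `d (d h)` on `T`, removing `i` first. -/
def ddSign (T : Finset (Fin n)) (i l : Fin n) : ℤ :=
  (-1) ^ ((T.filter (· < i)).card + ((T.erase i).filter (· < l)).card)

theorem ddSign_add_ddSign_swap {T : Finset (Fin n)} {i l : Fin n} (hi : i ∈ T) (hl : l ∈ T)
    (hil : i ≠ l) : ddSign T i l + ddSign T l i = 0 := by
  wlog hlt : i < l generalizing i l
  · rw [add_comm]
    exact this hl hi hil.symm (lt_of_le_of_ne (not_lt.mp hlt) hil.symm)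
  have h1 : ((T.erase i).filter (· < l)).card + 1 = (T.filter (· < l)).card := by
    rw [Finset.filter_erase]
    exact Finset.card_erase_add_one (Finset.mem_filter.mpr ⟨hi, hlt⟩)
  have h2 : ((T.erase l).filter (· < i)).card = (T.filter (· < i)).card := by
    rw [Finset.filter_erase, Finset.erase_eq_of_notMem (by simp [hlt.le])]
  rw [ddSign, ddSign, ← h1, h2, add_right_comm _ 1, pow_succ, add_comm (Finset.card _)]
  ring

theorem dFDual_dFDual (h : GCell n → G) (c : GCell n) : dFDual (dFDual h) c = 0 := by
  obtain ⟨z, T⟩ := c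
  let D : Fin n → Fin n → G := fun i l =>
    (h (z, (T.erase i).erase l) - h (z - unitV n l, (T.erase i).erase l))
      - (h (z - unitV n i, (T.erase i).erase l)
        - h (z - unitV n i - unitV n l, (T.erase i).erase l))
  have hD : ∀ i l, D i l = D l i := fun i l => by
    simp only [D, Finset.erase_right_comm, sub_right_comm z]
    abel
  have hexpand : dFDual (dFDual h) (z, T) = ∑ i ∈ T, ∑ l ∈ T.erase i, ddSign T i l • D i l := by
    rw [dFDual_apply]
    refine Finset.sum_congr rfl fun i _ => ?_
    rw [dFDual_apply, dFDual_apply, ← Finset.sum_sub_distrib, Finset.smul_sum]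
    refine Finset.sum_congr rfl fun l _ => ?_
    rw [← smul_sub, smul_smul, ddSign, pow_add]
  rw [hexpand]
  exact Finset.sum_sum_erase_eq_zero_of_antisymm T _ fun i hi l hl hil => by
    rw [hD l i, ← add_smul, ddSign_add_ddSign_swap hi hl hil, zero_smul]

end DualDerivative

section Hodge

variable {n : ℕ} {G : Type*} [AddCommGroup G]

theorem dFDual_hodgeToDual (u : GCell n → G) (z : Fin n → ℤ) (T : Finset (Fin n)) :
    dFDual (hodgeToDual u) (z, T)
      = ((-1 : ℤ) ^ (Tᶜ.card + 1) * hodgeSign Tᶜ) • codiff u (z, Tᶜ) := by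
  rw [codiff_apply, dFDual_apply, Finset.smul_sum]
  simp only [compl_compl]
  refine Finset.sum_congr rfl fun i hi => ?_
  have hiT : i ∉ Tᶜ := by simpa using hi
  rw [hodgeToDual, hodgeToDual, Finset.compl_erase, hodgeSign_insert hiT, ← smul_sub, smul_smul,
    smul_smul]
  congr 1
  have hbelow := card_filter_lt_add_card_filter_compl_lt Tᶜ i
  rw [compl_compl] at hbelow
  have hsign : (-1 : ℤ) ^ ((T.filter (· < i)).card + (Tᶜ.card + i.val))
      = (-1) ^ ((Tᶜ.card + 1) + ((Tᶜ.filter (· < i)).card + 1)) :=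
    neg_one_pow_eq_of_mod_two_eq (by omega)
  rw [pow_add, pow_add] at hsign
  linear_combination hodgeSign Tᶜ * hsign

end Hodge

section Telescoping

variable {G : Type*} [AddCommGroup G] {A : ℤ → G} {L : ℤ}

theorem Finset.sum_Icc_sub_sum_Icc_sub_one (hA : ∀ t < L, A t = 0) (u : ℤ) :
    ∑ t ∈ Finset.Icc L u, A t - ∑ t ∈ Finset.Icc L (u - 1), A t = A u := by
  rcases lt_or_ge u L with hu | hu
  · rw [Finset.Icc_eq_empty_of_lt hu, Finset.Icc_eq_empty_of_lt (by omega), hA u hu, sub_self]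
  · rw [← Finset.insert_Icc_sub_one_right_eq_Icc hu, Finset.sum_insert (by simp),
      add_sub_cancel_right]

theorem Finset.sum_Icc_sub_sub_one (hA : ∀ t < L, A t = 0) (u : ℤ) :
    ∑ t ∈ Finset.Icc L u, (A t - A (t - 1)) = A u := by
  rcases lt_or_ge u L with hu | hu
  · rw [Finset.Icc_eq_empty_of_lt hu, Finset.sum_empty, hA u hu]
  induction u, hu using Int.leInduction with
  | base => rw [Finset.Icc_self, Finset.sum_singleton, hA (L - 1) (by omega), sub_zero]
  | succ m hm ih =>
    rw [← Finset.insert_Icc_sub_one_right_eq_Icc (by omega), add_sub_cancel_right,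
      Finset.sum_insert (by simp), ih, add_sub_cancel_right, sub_add_cancel]

end Telescoping

section Homotopy

variable {n : ℕ} {G : Type*} [AddCommGroup G]

theorem update_sub_unitV_self (z : Fin n → ℤ) (i : Fin n) (t : ℤ) :
    Function.update (z - unitV n i) i t = Function.update z i t := by
  funext m
  by_cases hm : m = i <;> simp [Function.update, unitV, hm]

theorem update_sub_unitV (z : Fin n → ℤ) (i : Fin n) (t : ℤ) :
    Function.update z i t - unitV n i = Function.update z i (t - 1) := by
  funext m
  by_cases hm : m = i <;> simp [Function.update, unitV, hm]

theorem update_sub_unitV_of_ne (z : Fin n → ℤ) {i l : Fin n} (hil : i ≠ l) (t : ℤ) :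
    Function.update (z - unitV n i) l t = Function.update z l t - unitV n i := by
  funext m
  by_cases hm : m = l
  · subst hm; simp [unitV, Ne.symm hil]
  · simp [Function.update_of_ne hm]

variable [NeZero n]

/-- The cone operator of the Poincaré lemma: summation in the first coordinate direction,
starting from the hyperplane `x₀ = L`. -/
noncomputable def homotopyOp (L : ℤ) (h : GCell n → G) : GCell n → G := fun c =>
  if 0 ∈ c.2 then 0
  else ∑ t ∈ Finset.Icc L (c.1 0), h (Function.update c.1 0 t, insert 0 c.2)

theorem dFDual_insert_zero (h : GCell n → G) (y : Fin n → ℤ) {T : Finset (Fin n)} (h0 : 0 ∉ T) :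
    dFDual h (y, insert 0 T) = (h (y, T) - h (y - unitV n 0, T))
      - ∑ i ∈ T, ((-1 : ℤ) ^ (T.filter (· < i)).card) •
        (h (y, insert 0 (T.erase i)) - h (y - unitV n i, insert 0 (T.erase i))) := by
  rw [dFDual_apply, Finset.sum_insert h0]
  simp only [Fin.not_lt_zero, Finset.filter_false, Finset.card_empty, pow_zero, one_smul,
    Finset.erase_insert h0]
  rw [sub_eq_add_neg (_ - _), ← Finset.sum_neg_distrib]
  congr 1
  refine Finset.sum_congr rfl fun i hi => ?_
  have hi0 : i ≠ 0 := ne_of_mem_of_not_mem hi h0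
  rw [Finset.filter_insert, if_pos (Fin.pos_iff_ne_zero.mpr hi0),
    Finset.card_insert_of_notMem (by simp [h0]), pow_succ, mul_neg_one, neg_smul,
    Finset.erase_insert_of_ne hi0.symm]

variable {L : ℤ} {h : GCell n → G} {T : Finset (Fin n)}

theorem dFDual_homotopyOp_of_zero_mem (hsupp : ∀ y : Fin n → ℤ, y 0 < L → h (y, T) = 0)
    (h0 : 0 ∈ T) (z : Fin n → ℤ) : dFDual (homotopyOp L h) (z, T) = h (z, T) := by
  rw [dFDual_apply, Finset.sum_eq_single_of_mem 0 h0 fun i _ hi => by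
    simp [homotopyOp, h0, Ne.symm hi]]
  simp only [Fin.not_lt_zero, Finset.filter_false, Finset.card_empty, pow_zero, one_smul,
    homotopyOp, Finset.notMem_erase, if_false, Finset.insert_erase h0, update_sub_unitV_self]
  have hz : (z - unitV n 0) 0 = z 0 - 1 := by simp [unitV]
  rw [hz, Finset.sum_Icc_sub_sum_Icc_sub_one (A := fun t => h (Function.update z 0 t, T))
    (fun t ht => hsupp _ (by simpa using ht)), Function.update_eq_self]

theorem dFDual_homotopyOp_of_zero_notMem (hclosed : ∀ y, dFDual h (y, insert 0 T) = 0)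
    (hsupp : ∀ y : Fin n → ℤ, y 0 < L → h (y, T) = 0) (h0 : 0 ∉ T) (z : Fin n → ℤ) :
    dFDual (homotopyOp L h) (z, T) = h (z, T) := by
  have hslice : ∀ t, ∑ i ∈ T, ((-1 : ℤ) ^ (T.filter (· < i)).card) •
      (h (Function.update z 0 t, insert 0 (T.erase i))
        - h (Function.update z 0 t - unitV n i, insert 0 (T.erase i)))
      = h (Function.update z 0 t, T) - h (Function.update z 0 (t - 1), T) := fun t => by
    have := hclosed (Function.update z 0 t)
    rw [dFDual_insert_zero h _ h0, sub_eq_zero, update_sub_unitV] at this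
    exact this.symm
  rw [dFDual_apply]
  calc _ = ∑ i ∈ T, ∑ t ∈ Finset.Icc L (z 0), ((-1 : ℤ) ^ (T.filter (· < i)).card) •
        (h (Function.update z 0 t, insert 0 (T.erase i))
          - h (Function.update z 0 t - unitV n i, insert 0 (T.erase i))) := by
        refine Finset.sum_congr rfl fun i hi => ?_
        have hi0 : i ≠ 0 := ne_of_mem_of_not_mem hi h0
        have hz : (z - unitV n i) 0 = z 0 := by simp [unitV, hi0.symm]
        simp only [homotopyOp, Finset.mem_erase, h0, and_false, if_false, hz,
          update_sub_unitV_of_ne z hi0, ← Finset.sum_sub_distrib, Finset.smul_sum]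
    _ = h (z, T) := by
        rw [Finset.sum_comm, Finset.sum_congr rfl fun t _ => hslice t,
          Finset.sum_Icc_sub_sub_one (A := fun t => h (Function.update z 0 t, T))
            (fun t ht => hsupp _ (by simpa using ht)), Function.update_eq_self]

/-- Discrete Poincaré lemma. -/
theorem dFDual_homotopyOp {p : ℕ} (hclosed : ∀ c : GCell n, c.2.card = p + 1 → dFDual h c = 0)
    (hsupp : ∀ c : GCell n, c.2.card = p → c.1 0 < L → h c = 0) {c : GCell n}
    (hc : c.2.card = p) : dFDual (homotopyOp L h) c = h c := by
  obtain ⟨z, T⟩ := c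
  by_cases h0 : 0 ∈ T
  · exact dFDual_homotopyOp_of_zero_mem (fun y => hsupp (y, T) hc) h0 z
  · exact dFDual_homotopyOp_of_zero_notMem
      (fun y => hclosed _ (by simp [Finset.card_insert_of_notMem h0, hc]))
      (fun y => hsupp (y, T) hc) h0 z

end Homotopy

section CubeGeometry

variable {n : ℕ} {a : Fin n → ℤ} {w : ℕ} {z : Fin n → ℤ}

theorem dCellIn_compl_of_cellIn {S : Finset (Fin n)} (h : CellIn a w (z, S)) :
    DCellIn a w (z, Sᶜ) := fun m => by
  have hm := h m
  by_cases hS : m ∈ S <;> simp_all; omega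

theorem cellIn_compl_iff_not_dCellOnBdry (hw : 0 < w) {T : Finset (Fin n)}
    (hin : DCellIn a w (z, T)) : CellIn a w (z, Tᶜ) ↔ ¬ DCellOnBdry a w (z, T) := by
  constructor
  · rintro hC ⟨-, hbdry⟩
    -- the vertex obtained by stepping down in the directions where `z` is at the top face
    -- is an interior vertex of `*B`
    obtain ⟨-, m, hm⟩ := hbdry _ ⟨T.filter (fun m => z m = a m + w), Finset.filter_subset _ _, rfl⟩
    have hCm := hC m
    have hinm := hin m
    by_cases hmT : m ∈ T <;> by_cases htop : z m = a m + w <;> simp_all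
  · intro hnb
    by_contra hC
    obtain ⟨m, hm⟩ : ∃ m, ¬ (a m ≤ z m ∧ z m + (if m ∈ Tᶜ then 1 else 0) ≤ a m + w) := by
      simpa [CellIn] using hC
    refine hnb ⟨hin, fun v ⟨T', hT', hv⟩ => ⟨fun m' => ?_, m, ?_⟩⟩
    · have hinm := hin m'
      by_cases h1 : m' ∈ T' <;> by_cases h2 : m' ∈ T <;> simp_all [Finset.subset_iff] <;> omega
    · have hinm := hin m
      by_cases h1 : m ∈ T' <;> by_cases h2 : m ∈ T <;> simp_all [Finset.subset_iff] <;> omega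

end CubeGeometry

section CubeForms

variable {n : ℕ} {a : Fin n → ℤ} {w : ℕ} {G : Type*} [AddCommGroup G]

def restrictDB (a : Fin n → ℤ) (w j : ℕ) (h : GCell n → G) : FormDB a w j G := fun c => h c.1

open scoped Classical in
noncomputable def extDZ (a : Fin n → ℤ) (w j : ℕ) (g : FormDB a w j G) : GCell n → G :=
  fun c => if h : DCellIn a w c ∧ c.2.card = j then g ⟨c, h⟩ else 0

theorem dDB_restrictDB {j : ℕ} (h : GCell n → G) :
    dDB (restrictDB a w j h) = restrictDB a w (j + 1) (dFDual h) := rfl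

theorem restrictDB_extDZ {j : ℕ} (g : FormDB a w j G) : restrictDB a w j (extDZ a w j g) = g :=
  funext fun c => dif_pos c.2

theorem dDB_eq_restrictDB_dFDual {j : ℕ} (g : FormDB a w j G) :
    dDB g = restrictDB a w (j + 1) (dFDual (extDZ a w j g)) := by
  rw [← dDB_restrictDB, restrictDB_extDZ]

theorem dDB_dDB {j : ℕ} (g : FormDB a w j G) : dDB (dDB g) = 0 := by
  rw [dDB_eq_restrictDB_dFDual g, dDB_restrictDB]
  exact funext fun c => dFDual_dFDual _ c.1

def dDBHom (j : ℕ) : FormDB a w j G →+ FormDB a w (j + 1) G :=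
  AddMonoidHom.mk' dDB fun g₁ g₂ => funext fun c => by
    simp only [dDB, Pi.add_apply, ← Finset.sum_add_distrib, ← smul_add]
    exact Finset.sum_congr rfl fun _ _ => by rw [add_sub_add_comm]

theorem extZ_of_not_cellIn {k : ℕ} (f : FormB a w k G) {c : GCell n} (hc : ¬ CellIn a w c) :
    extZ a w k f c = 0 :=
  dif_neg fun h => hc h.1

/-- `c` is a face of each cell entering `δ` at `c`. -/
theorem codiff_extZ_of_not_cellIn {k : ℕ} (f : FormB a w k G) {c : GCell n}
    (hc : ¬ CellIn a w c) : codiff (extZ a w k f) c = 0 := by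
  rw [codiff_apply]
  refine Finset.sum_eq_zero fun i hi => ?_
  have hiS : i ∉ c.2 := Finset.mem_compl.mp hi
  have hface : (insert i c.2).erase i = c.2 := Finset.erase_insert hiS
  rw [extZ_of_not_cellIn f fun h => hc (by simpa [hface] using cellIn_erase h i),
    extZ_of_not_cellIn f fun h => hc (by
      simpa [hface] using cellIn_shift_erase h (Finset.mem_insert_self i c.2)), sub_zero,
    smul_zero]

theorem starB_eq_restrictDB_hodgeToDual (hw : 0 < w) {k j : ℕ} (f : FormB a w k G) :
    starB a w k f = restrictDB a w j (hodgeToDual (extZ a w k f)) := by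
  funext ⟨⟨z, T⟩, hin, _⟩
  by_cases hbd : DCellOnBdry a w (z, T)
  · rw [starB, if_pos hbd, restrictDB, hodgeToDual, extZ_of_not_cellIn f
      fun hC => (cellIn_compl_iff_not_dCellOnBdry hw hin).mp hC hbd, smul_zero]
  · rw [starB, if_neg hbd]
    rfl

end CubeForms

theorem AddMonoidHom.natCard_fiber_eq {A B : Type*} [AddGroup A] [AddGroup B] (φ : A →+ B)
    (x : A) : Nat.card {a // φ a = φ x} = Nat.card {a // φ a = 0} :=
  Nat.card_congr ((φ.fiberEquiv x 0).trans (Equiv.subtypeEquivRight fun a => by simp))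

section Correspondence

variable {n : ℕ} {a : Fin n → ℤ} {w k j : ℕ} {G : Type*} [AddCommGroup G]

def IsCoclosed (f : FormB a w k G) : Prop :=
  ∀ c : GCell n, CellIn a w c → c.2.card + 1 = k → codiff (extZ a w k f) c = 0

def IsClosedOnBoundary (g : FormDB a w j G) : Prop :=
  ∀ c : {c : GCell n // DCellIn a w c ∧ c.2.card = j + 1}, DCellOnBdry a w c.1 → dDB g c = 0

theorem IsCoclosed.exists_dDB_eq_starB (hw : 0 < w) (hkj : k + j + 1 = n) {f : FormB a w k G}
    (hf : IsCoclosed f) : ∃ g : FormDB a w j G, IsClosedOnBoundary g ∧ dDB g = starB a w k f := by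
  have : NeZero n := ⟨by omega⟩
  set Φ := hodgeToDual (extZ a w k f) with hΦ
  have hclosed : ∀ c : GCell n, c.2.card = j + 1 + 1 → dFDual Φ c = 0 := by
    rintro ⟨z, T⟩ hT
    have hcard := card_compl_add_card_fin T
    by_cases hC : CellIn a w (z, Tᶜ)
    · rw [dFDual_hodgeToDual, hf _ hC (by simp only at hT ⊢; omega), smul_zero]
    · rw [dFDual_hodgeToDual, codiff_extZ_of_not_cellIn f hC, smul_zero]
  have hsupp : ∀ c : GCell n, c.2.card = j + 1 → c.1 0 < a 0 → Φ c = 0 := fun c _ hc => by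
    rw [hΦ, hodgeToDual,
      extZ_of_not_cellIn f (c := (c.1, c.2ᶜ)) fun h => (h 0).1.not_gt hc, smul_zero]
  have hdg : dDB (restrictDB a w j (homotopyOp (a 0) Φ)) = starB a w k f := by
    rw [dDB_restrictDB, starB_eq_restrictDB_hodgeToDual hw]
    exact funext fun c => dFDual_homotopyOp hclosed hsupp c.2.2
  exact ⟨_, fun c hbd => by rw [hdg, starB, if_pos hbd], hdg⟩

theorem IsClosedOnBoundary.exists_isCoclosed (hw : 0 < w) (hkj : k + j + 1 = n)
    {g : FormDB a w j G} (hg : IsClosedOnBoundary g) :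
    ∃ f : FormB a w k G, IsCoclosed f ∧ dDB g = starB a w k f := by
  let f : FormB a w k G := fun c => hodgeSign c.1.2 • dFDual (extDZ a w j g) (c.1.1, c.1.2ᶜ)
  have hstar : restrictDB a w (j + 1) (hodgeToDual (extZ a w k f)) = dDB g := by
    funext ⟨⟨z, T⟩, hin, hT⟩
    have hcard := card_compl_add_card_fin T
    by_cases hC : CellIn a w (z, Tᶜ)
    · rw [dDB_eq_restrictDB_dFDual]
      simp only [restrictDB, hodgeToDual, extZ, dif_pos (⟨hC, by simp only at hT ⊢; omega⟩ :
        CellIn a w (z, Tᶜ) ∧ Tᶜ.card = k), f, compl_compl, smul_smul, hodgeSign_mul_self, one_smul]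
    · rw [restrictDB, hodgeToDual, extZ_of_not_cellIn f hC, smul_zero,
        hg _ (of_not_not fun h => hC ((cellIn_compl_iff_not_dCellOnBdry hw hin).mpr h))]
  refine ⟨f, fun ⟨z, S⟩ hc hS => ?_, by rw [starB_eq_restrictDB_hodgeToDual hw, hstar]⟩
  have hcard := card_compl_add_card_fin S
  have hdd := congrFun (congrArg dDB hstar) ⟨(z, Sᶜ), dCellIn_compl_of_cellIn hc, by
    simp only at hS ⊢; omega⟩
  rw [dDB_restrictDB, dDB_dDB] at hdd
  have hunit : IsUnit ((-1 : ℤ) ^ (S.card + 1) * hodgeSign S) :=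
    (isUnit_neg_one.pow _).mul (IsUnit.of_mul_eq_one _ (hodgeSign_mul_self S))
  have hdual := dFDual_hodgeToDual (extZ a w k f) z Sᶜ
  rw [compl_compl] at hdual
  rw [← hunit.smul_eq_zero, ← hdual]
  exact hdd

end Correspondence

theorem primal_dual_correspondence_general (n : ℕ) (G : Type*) [AddCommGroup G]
    (k j : ℕ) (hkj : k + j + 1 = n)
    (a : Fin n → ℤ) (w : ℕ) (hw : 0 < w) :
    -- `d` maps into the set of duals of coclosed `k`-forms:
    (∀ g : FormDB a w j G,
      (∀ c : {c : GCell n // DCellIn a w c ∧ c.2.card = j + 1},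
        DCellOnBdry a w c.1 → dDB g c = 0) →
      ∃ f : FormB a w k G,
        (∀ c : GCell n, CellIn a w c → c.2.card + 1 = k → codiff (extZ a w k f) c = 0) ∧
        dDB g = starB a w k f) ∧
    -- surjectivity:
    (∀ f : FormB a w k G,
      (∀ c : GCell n, CellIn a w c → c.2.card + 1 = k → codiff (extZ a w k f) c = 0) →
      ∃ g : FormDB a w j G,
        (∀ c : {c : GCell n // DCellIn a w c ∧ c.2.card = j + 1},
          DCellOnBdry a w c.1 → dDB g c = 0) ∧
        dDB g = starB a w k f) ∧
    -- the correspondence is `m`-to-one when `G` is finite: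
    (Finite G →
      ∀ f : FormB a w k G,
        (∀ c : GCell n, CellIn a w c → c.2.card + 1 = k → codiff (extZ a w k f) c = 0) →
        Nat.card {g : FormDB a w j G // dDB g = starB a w k f} =
          Nat.card {g : FormDB a w j G // dDB g = 0}) := by
  refine ⟨fun g hg => IsClosedOnBoundary.exists_isCoclosed hw hkj hg,
    fun f hf => IsCoclosed.exists_dDB_eq_starB hw hkj hf, fun _ f hf => ?_⟩
  obtain ⟨g₀, -, hg₀⟩ := IsCoclosed.exists_dDB_eq_starB hw hkj hf
  rw [← hg₀]
  exact (dDBHom j).natCard_fiber_eq g₀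

/-- **Lemma 2.6 (Primal–dual correspondence).**
Take any `1 ≤ k ≤ n − 1` (with `j := n − k − 1`, i.e. `k + j + 1 = n`), an abelian group
`G`, and a cube `B` in `ℤⁿ`.  Then the exterior derivative `d` on the dual cube `*B` is a
surjective map from the set of `G`-valued `(n−k−1)`-forms `g` on `*B` satisfying `dg = 0`
on the boundary of `*B`, onto the set of Hodge duals `*f` of `G`-valued `k`-forms `f` on
`B` satisfying `δf = 0`.  Moreover, if `G` is finite, every such `*f` has exactly `m`
preimages under `d`, where `m` is the number of closed `G`-valued `(n−k−1)`-forms on `*B`.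
(`δf = 0` means: the coderivative of the extension of `f` by zero vanishes on the
`(k−1)`-cells of `B`.) -/
theorem primal_dual_correspondence (n : ℕ) (G : Type*) [AddCommGroup G]
    (k j : ℕ) (hk : 1 ≤ k) (hkj : k + j + 1 = n)
    (a : Fin n → ℤ) (w : ℕ) (hw : 0 < w) :
    -- `d` maps into the set of duals of coclosed `k`-forms:
    (∀ g : FormDB a w j G,
      (∀ c : {c : GCell n // DCellIn a w c ∧ c.2.card = j + 1},
        DCellOnBdry a w c.1 → dDB g c = 0) →
      ∃ f : FormB a w k G,
        (∀ c : GCell n, CellIn a w c → c.2.card + 1 = k → codiff (extZ a w k f) c = 0) ∧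
        dDB g = starB a w k f) ∧
    -- surjectivity:
    (∀ f : FormB a w k G,
      (∀ c : GCell n, CellIn a w c → c.2.card + 1 = k → codiff (extZ a w k f) c = 0) →
      ∃ g : FormDB a w j G,
        (∀ c : {c : GCell n // DCellIn a w c ∧ c.2.card = j + 1},
          DCellOnBdry a w c.1 → dDB g c = 0) ∧
        dDB g = starB a w k f) ∧
    -- the correspondence is `m`-to-one when `G` is finite:
    (Finite G →
      ∀ f : FormB a w k G,
        (∀ c : GCell n, CellIn a w c → c.2.card + 1 = k → codiff (extZ a w k f) c = 0) →
        Nat.card {g : FormDB a w j G // dDB g = starB a w k f} =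
          Nat.card {g : FormDB a w j G // dDB g = 0}) :=
  primal_dual_correspondence_general n G k j hkj a w hw
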